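/- arXiv:1803.08918 — 4 statements merged into one kernel-verified Lean document; each statement's English description precedes it below -/
import Mathlib

section
/- For integers n ≥ 0 and s with 2 ≤ 2s ≤ n+2, the number of lattice paths from (0,0) to (n+2-2s, n+2) using steps (x,y)→(x+1,y+1) or (x,y)→(x-1,y+1), whose first step (step 0) and last step (step n+1) both go right, and which at some point reach x-coordinate strictly less than 0 (i.e., cross the line x=0), equals binomial(n, s-2). -/
open Finset
open scoped Classical
noncomputable section

/-- Position (x-coordinate) after `t` steps of the path `p`, where `true` encodes a
right step `(x,y) ↦ (x+1,y+1)` and `false` a left step `(x,y) ↦ (x-1,y+1)`. -/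
def pathPos {m : ℕ} (p : Fin m → Bool) (t : ℕ) : ℤ :=
  ∑ j : Fin m, if (j : ℕ) < t then (if p j then (1 : ℤ) else -1) else 0

/-- Generally admissible paths of size `(n,s)`: `n+2` diagonal steps starting at `(0,0)`,
the 0-th and the last step going right, with exactly `s` left steps
(hence ending at `(n+2-2s, n+2)`). -/
def admissible (n s : ℕ) : Finset (Fin (n + 2) → Bool) :=
  Finset.univ.filter (fun p =>
    (∀ j : Fin (n + 2), (j : ℕ) = 0 → p j = true) ∧
    (∀ j : Fin (n + 2), (j : ℕ) = n + 1 → p j = true) ∧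
    (Finset.univ.filter (fun j => p j = false)).card = s)

/-- The path crosses the line `x = 0`, i.e. reaches x-coordinate `-1` at some time. -/
def crossesLeft {m : ℕ} (p : Fin m → Bool) : Prop :=
  ∃ t ∈ Finset.range (m + 1), pathPos p t = -1

/-- A path of size `(n,s)` crosses the line `x = n+2-2s`,
i.e. reaches x-coordinate `n+3-2s` at some time. -/
def crossesRight (n s : ℕ) (p : Fin (n + 2) → Bool) : Prop :=
  ∃ t ∈ Finset.range (n + 3), pathPos p t = (n : ℤ) + 3 - 2 * s

/-- `L n s`: the number of generally admissible paths of size `(n,s)`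
crossing the line `x = 0`. -/
def L (n s : ℕ) : ℕ := ((admissible n s).filter (fun p => crossesLeft p)).card

/-- Constrained lattice paths: `n+2` diagonal steps from `(0,0)` to `(n+2-2s, n+2)`,
staying inside the strip `0 ≤ x ≤ n+2-2s`.  (`n` is allowed to be a negative integer,
with the convention that there are `max (n+2) 0` steps.) -/
def aPaths (n : ℤ) (s : ℕ) : Finset (Fin (n + 2).toNat → Bool) :=
  Finset.univ.filter (fun p =>
    pathPos p (n + 2).toNat = n + 2 - 2 * s ∧
    ∀ t ∈ Finset.range ((n + 2).toNat + 1),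
      0 ≤ pathPos p t ∧ pathPos p t ≤ n + 2 - 2 * s)

/-- `a n s`: the number of lattice paths from `(0,0)` to `(n+2-2s, n+2)` with steps
`(x,y) ↦ (x±1, y+1)` staying inside the strip `0 ≤ x ≤ n+2-2s`. -/
def a (n : ℤ) (s : ℕ) : ℕ := (aPaths n s).card

/-- Binomial coefficient `C(n,k)` with integer lower index, zero when `k < 0`. -/
def binom (n : ℕ) (k : ℤ) : ℕ := if k < 0 then 0 else n.choose k.toNat

/-- `b W H`: the number of lattice paths from `(0,0)` to `(W,H)` with steps
`(x,y) ↦ (x±1,y+1)` staying in the strip `0 ≤ x ≤ W`, whose first and last steps go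
right, and whose intermediate steps come in consecutive same-direction pairs
`(1,2), (3,4), …, (H-3,H-2)`. -/
def bPaths (W H : ℕ) : Finset (Fin H → Bool) :=
  Finset.univ.filter (fun p =>
    (∀ j : Fin H, (j : ℕ) = 0 → p j = true) ∧
    (∀ j : Fin H, (j : ℕ) = H - 1 → p j = true) ∧
    (∀ j1 j2 : Fin H, (j1 : ℕ) % 2 = 1 → (j2 : ℕ) = (j1 : ℕ) + 1 →
      (j1 : ℕ) + 1 ≤ H - 2 → p j1 = p j2) ∧
    pathPos p H = (W : ℤ) ∧
    ∀ t ∈ Finset.range (H + 1), 0 ≤ pathPos p t ∧ pathPos p t ≤ (W : ℤ))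

def b (W H : ℕ) : ℕ := (bPaths W H).card

lemma pathPos_zero {m : ℕ} (p : Fin m → Bool) : pathPos p 0 = 0 := by
  simp [pathPos]

lemma pathPos_succ {m : ℕ} (p : Fin m → Bool) (t : ℕ) (ht : t < m) :
    pathPos p (t + 1) = pathPos p t + (if p ⟨t, ht⟩ then 1 else -1) := by
  unfold pathPos
  have : ∀ j : Fin m,
      (if (j : ℕ) < t + 1 then (if p j then (1 : ℤ) else -1) else 0)
      = (if (j : ℕ) < t then (if p j then (1 : ℤ) else -1) else 0)
        + (if j = ⟨t, ht⟩ then (if p j then (1 : ℤ) else -1) else 0) := by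
    intro j
    by_cases h1 : (j : ℕ) < t + 1 <;> by_cases h2 : (j : ℕ) < t <;>
      by_cases h3 : j = ⟨t, ht⟩ <;>
      simp_all [Fin.ext_iff] <;> omega
  rw [Finset.sum_congr rfl (fun j _ => this j), Finset.sum_add_distrib,
    Finset.sum_ite_eq' Finset.univ (⟨t, ht⟩ : Fin m)]
  simp

lemma pathPos_of_ge {m : ℕ} (p : Fin m → Bool) (t : ℕ) (h : m ≤ t) :
    pathPos p t = pathPos p m := by
  unfold pathPos
  refine Finset.sum_congr rfl fun j _ => ?_
  rw [if_pos (lt_of_lt_of_le j.isLt h), if_pos j.isLt]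

lemma pathPos_final {m : ℕ} (p : Fin m → Bool) :
    pathPos p m = (m : ℤ) - 2 * ((Finset.univ.filter (fun j => p j = false)).card : ℤ) := by
  unfold pathPos
  have : ∀ j : Fin m,
      (if (j : ℕ) < m then (if p j then (1 : ℤ) else -1) else 0)
      = 1 - 2 * (if p j = false then (1 : ℤ) else 0) := by
    intro j
    rw [if_pos j.isLt]
    cases hp : p j <;> simp
  rw [Finset.sum_congr rfl (fun j _ => this j), Finset.sum_sub_distrib, ← Finset.mul_sum,
    Finset.sum_boole]
  simp

lemma pathPos_flip {m : ℕ} (p : Fin m → Bool) (τ t : ℕ) :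
    pathPos (fun j => if (j : ℕ) < τ then !(p j) else p j) t
      = pathPos p t - 2 * pathPos p (min τ t) := by
  unfold pathPos
  rw [Finset.mul_sum, ← Finset.sum_sub_distrib]
  refine Finset.sum_congr rfl fun j _ => ?_
  by_cases h1 : (j : ℕ) < t <;> by_cases h2 : (j : ℕ) < τ <;>
    cases hp : p j <;>
    simp [h1, h2, hp, Nat.lt_min] <;> norm_num

lemma pathPos_step_le {m : ℕ} (p : Fin m → Bool) (t : ℕ) :
    pathPos p (t + 1) ≤ pathPos p t + 1 := by
  by_cases ht : t < m
  · rw [pathPos_succ p t ht]; split <;> omega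
  · push_neg at ht
    rw [pathPos_of_ge p (t+1) (by omega), pathPos_of_ge p t ht]; omega

lemma exists_hit_one {m : ℕ} (p : Fin m → Bool) (t : ℕ) (h : 1 ≤ pathPos p t) :
    ∃ u, pathPos p u = 1 := by
  induction t with
  | zero => simp [pathPos_zero] at h
  | succ t ih =>
    by_cases he : pathPos p (t + 1) = 1
    · exact ⟨t + 1, he⟩
    · exact ih (by have := pathPos_step_le p t; omega)

/-- Flip all steps strictly before the first time the path hits level `c`. -/
def flipAt (c : ℤ) {m : ℕ} (p : Fin m → Bool) : Fin m → Bool :=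
  if h : ∃ t, pathPos p t = c then
    fun j => if (j : ℕ) < Nat.find h then !(p j) else p j
  else p

lemma flipAt_eq (c : ℤ) {m : ℕ} (p : Fin m → Bool) (h : ∃ t, pathPos p t = c) :
    flipAt c p = fun j : Fin m => if (j : ℕ) < Nat.find h then !(p j) else p j := by
  rw [flipAt, dif_pos h]

lemma flipAt_pathPos (c : ℤ) {m : ℕ} (p : Fin m → Bool) (h : ∃ t, pathPos p t = c) (t : ℕ) :
    pathPos (flipAt c p) t = pathPos p t - 2 * pathPos p (min (Nat.find h) t) := by
  rw [flipAt_eq c p h, pathPos_flip]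

lemma find_pos (c : ℤ) (hc : c ≠ 0) {m : ℕ} (p : Fin m → Bool) (h : ∃ t, pathPos p t = c) :
    1 ≤ Nat.find h := by
  rcases Nat.eq_zero_or_pos (Nat.find h) with h0 | h0
  · have := Nat.find_spec h
    rw [h0, pathPos_zero] at this
    exact absurd this.symm hc
  · exact h0

lemma find_le (c : ℤ) {m : ℕ} (p : Fin m → Bool) (h : ∃ t, pathPos p t = c) :
    Nat.find h ≤ m := by
  by_contra hlt
  push_neg at hlt
  have h2 : pathPos p m = c := by
    rw [← pathPos_of_ge p (Nat.find h) (by omega)]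
    exact Nat.find_spec h
  exact Nat.find_min h hlt h2

lemma find_lt (c : ℤ) {m : ℕ} (p : Fin m → Bool) (h : ∃ t, pathPos p t = c)
    (hm : pathPos p m ≠ c) : Nat.find h < m := by
  rcases lt_or_eq_of_le (find_le c p h) with h' | h'
  · exact h'
  · have := Nat.find_spec h
    rw [h'] at this
    exact absurd this hm

lemma flipAt_spec (c : ℤ) {m : ℕ} (p : Fin m → Bool) (h : ∃ t, pathPos p t = c) :
    pathPos (flipAt c p) (Nat.find h) = -c := by
  rw [flipAt_pathPos c p h, min_self, Nat.find_spec h]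
  ring

lemma exists_neg (c : ℤ) {m : ℕ} (p : Fin m → Bool) (h : ∃ t, pathPos p t = c) :
    ∃ t, pathPos (flipAt c p) t = -c := ⟨Nat.find h, flipAt_spec c p h⟩

lemma find_neg_eq (c : ℤ) {m : ℕ} (p : Fin m → Bool) (h : ∃ t, pathPos p t = c) :
    Nat.find (exists_neg c p h) = Nat.find h := by
  refine le_antisymm (Nat.find_min' _ (flipAt_spec c p h)) ?_
  by_contra hlt
  push_neg at hlt
  set σ := Nat.find (exists_neg c p h) with hσ
  have hs : pathPos (flipAt c p) σ = -c := Nat.find_spec (exists_neg c p h)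
  rw [flipAt_pathPos c p h, min_eq_right (le_of_lt hlt)] at hs
  have : pathPos p σ = c := by omega
  exact Nat.find_min h hlt this

lemma flipAt_flipAt (c : ℤ) {m : ℕ} (p : Fin m → Bool) (h : ∃ t, pathPos p t = c) :
    flipAt (-c) (flipAt c p) = p := by
  have h2 := exists_neg c p h
  rw [flipAt_eq (-c) (flipAt c p) h2]
  funext j
  rw [show Nat.find h2 = Nat.find h from find_neg_eq c p h, flipAt_eq c p h]
  by_cases hj : (j : ℕ) < Nat.find h <;> simp [hj]

/-- Number of boolean functions on `Fin m` with exactly `k` falses. -/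
lemma count_bool (m k : ℕ) :
    ((Finset.univ : Finset (Fin m → Bool)).filter
      (fun f => (Finset.univ.filter (fun j => f j = false)).card = k)).card = m.choose k := by
  have hcard : (Finset.powersetCard k (Finset.univ : Finset (Fin m))).card = m.choose k := by
    rw [Finset.card_powersetCard, Finset.card_fin]
  rw [← hcard]
  apply Finset.card_bij (i := fun f _ => Finset.univ.filter (fun j => f j = false))
  · intro f hf
    rw [Finset.mem_powersetCard]
    exact ⟨Finset.filter_subset _ _, (Finset.mem_filter.mp hf).2⟩
  · intro f hf g hg hfg
    funext j
    have : j ∈ Finset.univ.filter (fun j => f j = false) ↔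
        j ∈ Finset.univ.filter (fun j => g j = false) := by rw [hfg]
    simp only [Finset.mem_filter, Finset.mem_univ, true_and] at this
    cases hf' : f j <;> cases hg' : g j <;> simp_all
  · intro S hS
    rw [Finset.mem_powersetCard] at hS
    refine ⟨fun j => if j ∈ S then false else true, ?_, ?_⟩
    · simp only [Finset.mem_filter, Finset.mem_univ, true_and]
      rw [← hS.2]
      congr 1
      ext j
      simp only [Finset.mem_filter, Finset.mem_univ, true_and]
      split <;> simp_all
    · ext j
      simp only [Finset.mem_filter, Finset.mem_univ, true_and]
      split <;> simp_all

/-- Splitting off index 0 from the falses of a path with `q 0 = false`, `q (n+1) = true`. -/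
lemma card_falses (n : ℕ) (q : Fin (n + 2) → Bool)
    (h0 : q ⟨0, by omega⟩ = false) (hlast : q ⟨n + 1, by omega⟩ = true) :
    (Finset.univ.filter (fun j => q j = false)).card
      = 1 + (Finset.univ.filter
          (fun j : Fin n => q ⟨(j : ℕ) + 1, by omega⟩ = false)).card := by
  have himg : Finset.univ.filter (fun j => q j = false)
      = insert (⟨0, by omega⟩ : Fin (n + 2))
        ((Finset.univ.filter (fun j : Fin n => q ⟨(j : ℕ) + 1, by omega⟩ = false)).image
          (fun j : Fin n => (⟨(j : ℕ) + 1, by omega⟩ : Fin (n + 2)))) := by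
    ext j
    simp only [Finset.mem_filter, Finset.mem_univ, true_and, Finset.mem_insert,
      Finset.mem_image]
    constructor
    · intro hj
      by_cases hj0 : (j : ℕ) = 0
      · left; exact Fin.ext hj0
      · right
        have hjn : (j : ℕ) ≠ n + 1 := by
          intro hc
          rw [show j = (⟨n + 1, by omega⟩ : Fin (n + 2)) from Fin.ext hc] at hj
          simp [hlast] at hj
        have hlt : (j : ℕ) - 1 < n := by omega
        refine ⟨⟨(j : ℕ) - 1, hlt⟩, ?_, ?_⟩
        · convert hj using 2
          exact Fin.ext (by simp; omega)
        · exact Fin.ext (by simp; omega)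
    · rintro (rfl | ⟨i, hi, rfl⟩)
      · exact h0
      · exact hi
  have hinj : Function.Injective (fun j : Fin n => (⟨(j : ℕ) + 1, by omega⟩ : Fin (n + 2))) := by
    intro i j hij
    have := Fin.ext_iff.mp hij
    simp only at this
    exact Fin.ext (by omega)
  have hnm : (⟨0, by omega⟩ : Fin (n + 2)) ∉
      ((Finset.univ.filter (fun j : Fin n => q ⟨(j : ℕ) + 1, by omega⟩ = false)).image
        (fun j : Fin n => (⟨(j : ℕ) + 1, by omega⟩ : Fin (n + 2)))) := by
    simp only [Finset.mem_image, not_exists]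
    rintro i ⟨hi, hc⟩
    have := Fin.ext_iff.mp hc
    simp at this
  rw [himg, Finset.card_insert_of_notMem hnm, Finset.card_image_of_injective _ hinj]
  omega

/-- Reflected paths: first step left, last step right, `s-1` left steps in total. -/
def reflB (n s : ℕ) : Finset (Fin (n + 2) → Bool) :=
  Finset.univ.filter (fun q =>
    (∀ j : Fin (n + 2), (j : ℕ) = 0 → q j = false) ∧
    (∀ j : Fin (n + 2), (j : ℕ) = n + 1 → q j = true) ∧
    (Finset.univ.filter (fun j => q j = false)).card = s - 1)

lemma step1 (n s : ℕ) (h1 : 1 ≤ s) (h2 : 2 * s ≤ n + 2) : L n s = (reflB n s).card := by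
  rw [L]
  apply Finset.card_bij' (i := fun p _ => flipAt (-1) p) (j := fun q _ => flipAt 1 q)
  · -- hi : maps into reflB
    intro p hp
    rw [Finset.mem_filter] at hp
    obtain ⟨hadm, hcross⟩ := hp
    rw [admissible, Finset.mem_filter] at hadm
    obtain ⟨-, h0, hlastp, hcard⟩ := hadm
    obtain ⟨t, -, ht⟩ := hcross
    have hP : ∃ t, pathPos p t = -1 := ⟨t, ht⟩
    have hfin : pathPos p (n + 2) = (n + 2 : ℤ) - 2 * s := by
      rw [pathPos_final, hcard]; push_cast; ring
    have hτ1 : 1 ≤ Nat.find hP := find_pos (-1) (by norm_num) p hP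
    have hτlt : Nat.find hP < n + 2 := find_lt (-1) p hP (by rw [hfin]; omega)
    rw [reflB, Finset.mem_filter]
    refine ⟨Finset.mem_univ _, ?_, ?_, ?_⟩
    · intro j hj
      rw [flipAt_eq (-1) p hP]
      simp only [hj]
      rw [if_pos (by omega), h0 j hj]
      rfl
    · intro j hj
      rw [flipAt_eq (-1) p hP]
      simp only [hj]
      rw [if_neg (by omega)]
      exact hlastp j hj
    · have hq := flipAt_pathPos (-1) p hP (n + 2)
      rw [min_eq_left (by omega), Nat.find_spec hP, hfin] at hq
      rw [pathPos_final] at hq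
      have hc2 := h2
      push_cast at hq
      omega
  · -- hj : maps back into the admissible crossing set
    intro q hq
    rw [reflB, Finset.mem_filter] at hq
    obtain ⟨-, h0, hlastq, hcard⟩ := hq
    have hfin : pathPos q (n + 2) = (n + 2 : ℤ) - 2 * (s - 1 : ℕ) := by
      rw [pathPos_final, hcard]; push_cast; ring
    have hfin2 : (2 : ℤ) ≤ pathPos q (n + 2) := by
      rw [hfin]; have : ((s - 1 : ℕ) : ℤ) = (s : ℤ) - 1 := by omega
      rw [this]; push_cast; omega
    have hQ : ∃ t, pathPos q t = 1 := exists_hit_one q (n + 2) (by omega)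
    have hσ1 : 1 ≤ Nat.find hQ := find_pos 1 (by norm_num) q hQ
    have hσlt : Nat.find hQ < n + 2 := find_lt 1 q hQ (by omega)
    rw [Finset.mem_filter, admissible, Finset.mem_filter]
    refine ⟨⟨Finset.mem_univ _, ?_, ?_, ?_⟩, ?_⟩
    · intro j hj
      rw [flipAt_eq 1 q hQ]
      simp only [hj]
      rw [if_pos (by omega), h0 j hj]
      rfl
    · intro j hj
      rw [flipAt_eq 1 q hQ]
      simp only [hj]
      rw [if_neg (by omega)]
      exact hlastq j hj
    · have hp := flipAt_pathPos 1 q hQ (n + 2)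
      rw [min_eq_left (by omega), Nat.find_spec hQ, hfin] at hp
      rw [pathPos_final] at hp
      have : ((s - 1 : ℕ) : ℤ) = (s : ℤ) - 1 := by omega
      rw [this] at hp
      push_cast at hp
      omega
    · exact ⟨Nat.find hQ, Finset.mem_range.mpr (by omega), flipAt_spec 1 q hQ⟩
  · -- left inverse
    intro p hp
    rw [Finset.mem_filter] at hp
    obtain ⟨t, -, ht⟩ := hp.2
    have hP : ∃ t, pathPos p t = -1 := ⟨t, ht⟩
    have := flipAt_flipAt (-1) p hP
    norm_num at this
    exact this
  · -- right inverse
    intro q hq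
    rw [reflB, Finset.mem_filter] at hq
    obtain ⟨-, h0, hlastq, hcard⟩ := hq
    have hfin : (2 : ℤ) ≤ pathPos q (n + 2) := by
      rw [pathPos_final, hcard]
      have : ((s - 1 : ℕ) : ℤ) = (s : ℤ) - 1 := by omega
      rw [this]; push_cast; omega
    have hQ : ∃ t, pathPos q t = 1 := exists_hit_one q (n + 2) (by omega)
    have := flipAt_flipAt 1 q hQ
    norm_num at this
    exact this

def resPath (n : ℕ) (q : Fin (n + 2) → Bool) : Fin n → Bool :=
  fun j => q ⟨(j : ℕ) + 1, by omega⟩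

def extPath (n : ℕ) (f : Fin n → Bool) : Fin (n + 2) → Bool :=
  fun j => if h : 1 ≤ (j : ℕ) ∧ (j : ℕ) ≤ n then f ⟨(j : ℕ) - 1, by omega⟩
    else decide ((j : ℕ) = n + 1)

lemma extPath_zero (n : ℕ) (f : Fin n → Bool) (j : Fin (n + 2)) (hj : (j : ℕ) = 0) :
    extPath n f j = false := by
  rw [extPath]
  rw [dif_neg (by omega)]
  simp only [decide_eq_false_iff_not]
  omega

lemma extPath_last (n : ℕ) (f : Fin n → Bool) (j : Fin (n + 2)) (hj : (j : ℕ) = n + 1) :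
    extPath n f j = true := by
  rw [extPath]
  rw [dif_neg (by omega)]
  simp only [decide_eq_true_eq]
  omega

lemma resPath_extPath (n : ℕ) (f : Fin n → Bool) : resPath n (extPath n f) = f := by
  funext j
  show extPath n f ⟨(j : ℕ) + 1, by omega⟩ = f j
  rw [extPath]
  simp only
  rw [dif_pos (by refine ⟨?_, ?_⟩ <;> show _ ≤ _ <;> [skip; skip] <;> first
        | (show (1 : ℕ) ≤ (j : ℕ) + 1; omega)
        | (show (j : ℕ) + 1 ≤ n; have := j.isLt; omega))]
  rfl

lemma extPath_resPath (n : ℕ) (q : Fin (n + 2) → Bool)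
    (h0 : ∀ j : Fin (n + 2), (j : ℕ) = 0 → q j = false)
    (hlast : ∀ j : Fin (n + 2), (j : ℕ) = n + 1 → q j = true) :
    extPath n (resPath n q) = q := by
  funext j
  rw [extPath]
  by_cases hj : 1 ≤ (j : ℕ) ∧ (j : ℕ) ≤ n
  · rw [dif_pos hj]
    show q ⟨(j : ℕ) - 1 + 1, by omega⟩ = q j
    congr 1
    apply Fin.ext
    show (j : ℕ) - 1 + 1 = (j : ℕ)
    omega
  · rw [dif_neg hj]
    have hj2 : (j : ℕ) = 0 ∨ (j : ℕ) = n + 1 := by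
      have := j.isLt
      omega
    rcases hj2 with hj2 | hj2
    · rw [h0 j hj2]
      simp only [decide_eq_false_iff_not]
      omega
    · rw [hlast j hj2]
      simp only [decide_eq_true_eq]
      omega

lemma card_falses_res (n : ℕ) (q : Fin (n + 2) → Bool)
    (h0 : q ⟨0, by omega⟩ = false) (hlast : q ⟨n + 1, by omega⟩ = true) :
    (Finset.univ.filter (fun j => q j = false)).card
      = 1 + (Finset.univ.filter (fun j : Fin n => resPath n q j = false)).card := by
  rw [card_falses n q h0 hlast]
  have heq : Finset.filter (fun j : Fin n => q ⟨(j : ℕ) + 1, by omega⟩ = false) Finset.univ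
      = Finset.filter (fun j : Fin n => resPath n q j = false) Finset.univ :=
    Finset.filter_congr (fun j _ => Iff.rfl)
  rw [heq]

lemma step2 (n s : ℕ) (h1 : 1 ≤ s) : (reflB n s).card = binom n ((s : ℤ) - 2) := by
  rcases eq_or_lt_of_le h1 with hs1 | hs2
  · -- s = 1 : both sides are 0
    rw [← hs1]
    have hB : reflB n 1 = ∅ := by
      rw [Finset.eq_empty_iff_forall_notMem]
      intro q hq
      rw [reflB, Finset.mem_filter] at hq
      obtain ⟨-, h0, -, hcard⟩ := hq
      have : (⟨0, by omega⟩ : Fin (n + 2)) ∈ Finset.univ.filter (fun j => q j = false) := by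
        simp only [Finset.mem_filter, Finset.mem_univ, true_and]
        exact h0 _ rfl
      have := Finset.card_pos.mpr ⟨_, this⟩
      omega
    rw [hB, Finset.card_empty, binom, if_pos (by norm_num)]
  · -- s ≥ 2
    have hbin : binom n ((s : ℤ) - 2) = n.choose (s - 2) := by
      rw [binom, if_neg (by omega)]
      congr 1
      omega
    rw [hbin, ← count_bool n (s - 2)]
    apply Finset.card_nbij' (i := resPath n) (j := extPath n)
    · intro q hq
      rw [reflB, Finset.mem_coe, Finset.mem_filter] at hq
      obtain ⟨-, h0, hlast, hcard⟩ := hq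
      rw [card_falses_res n q (h0 _ rfl) (hlast _ rfl)] at hcard
      simp only [Finset.mem_coe, Finset.mem_filter, Finset.mem_univ, true_and]
      omega
    · intro f hf
      simp only [Finset.mem_coe, Finset.mem_filter, Finset.mem_univ, true_and] at hf
      have h0 := extPath_zero n f
      have hlast := extPath_last n f
      rw [reflB]
      simp only [Finset.mem_coe, Finset.mem_filter, Finset.mem_univ, true_and]
      refine ⟨h0, hlast, ?_⟩
      rw [card_falses_res n _ (h0 _ rfl) (hlast _ rfl), resPath_extPath]
      have : (Finset.univ.filter (fun j : Fin n => f j = false)).card = s - 2 := hf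
      omega
    · intro q hq
      rw [reflB] at hq
      simp only [Finset.mem_coe, Finset.mem_filter, Finset.mem_univ, true_and] at hq
      exact extPath_resPath n q hq.1 hq.2.1
    · intro f hf
      exact resPath_extPath n f

/-- for `2 ≤ 2s ≤ n+2`, the number of generally admissible paths of size
`(n,s)` crossing the line `x = 0` equals `C(n, s-2)` (which is `0` for `s < 2`). -/
theorem stmt0 (n s : ℕ) (h1 : 2 ≤ 2 * s) (h2 : 2 * s ≤ n + 2) :
    L n s = binom n ((s : ℤ) - 2) := by
  have hs : 1 ≤ s := by omega
  rw [step1 n s hs h2, step2 n s hs]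
end
end

section
/- Let E_{2k} be the exterior algebra over ℂ on x_1,…,x_{2k}, and let f = Σ_{i=1}^k α_i x_{2i−1} x_{2i} and g = Σ_{i=1}^k x_{2i−1} x_{2i} with nonzero pairwise distinct α_i ∈ ℂ. Then every monomial y_1 y_2 ⋯ y_k with y_i ∈ {x_{2i−1}, x_{2i}} lies outside the ideal (f,g); hence dim (E_{2k}/(f,g))_k ≥ 2^k. -/
open Finset
set_option maxHeartbeats 1000000
set_option synthInstance.maxHeartbeats 400000
noncomputable section

/-- The `i`-th generator `x_i` (1-indexed, `1 ≤ i ≤ n`) of the exterior algebra `E_n`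
over `ℂ`. -/
def X (n i : ℕ) : ExteriorAlgebra ℂ (Fin n → ℂ) :=
  ExteriorAlgebra.ι ℂ (fun j => if (j : ℕ) + 1 = i then 1 else 0)

/-- The degree-`s` graded component of `E_n`, spanned by the products of `s` distinct
generators (with strictly increasing indices in `{1, …, n}`). -/
def comp (n s : ℕ) : Submodule ℂ (ExteriorAlgebra ℂ (Fin n → ℂ)) :=
  Submodule.span ℂ { m | ∃ l : List ℕ, l.length = s ∧ l.Chain' (· < ·) ∧
    (∀ i ∈ l, 1 ≤ i ∧ i ≤ n) ∧ m = (l.map (X n)).prod }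

/-- The two-sided ideal of `E_n` generated by `f` and `g`, as a `ℂ`-submodule. -/
def idl (n : ℕ) (f g : ExteriorAlgebra ℂ (Fin n → ℂ)) :
    Submodule ℂ (ExteriorAlgebra ℂ (Fin n → ℂ)) :=
  Submodule.span ℂ { x | ∃ u v, x = u * f * v ∨ x = u * g * v }

namespace Stmt14Aux

/-- chosen 1-indexed generator of pair `i`. -/
def chosen (c : ℕ → Bool) (i : ℕ) : ℕ := if c i then 2 * i - 1 else 2 * i

/-- 0-indexed chosen index. -/
def idx (k : ℕ) (c : ℕ → Bool) (i0 : Fin k) : Fin (2 * k) :=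
  ⟨if c (i0.1 + 1) then 2 * i0.1 else 2 * i0.1 + 1, by have := i0.isLt; split <;> omega⟩

def psi (k : ℕ) (c : ℕ → Bool) :
    ExteriorAlgebra ℂ (Fin (2 * k) → ℂ) →ₐ[ℂ] ExteriorAlgebra ℂ (Fin k → ℂ) :=
  ExteriorAlgebra.map (LinearMap.funLeft ℂ ℂ (idx k c))

lemma psi_X (k : ℕ) (c : ℕ → Bool) (a : ℕ) :
    psi k c (X (2 * k) a) =
      ExteriorAlgebra.ι ℂ (fun i0 : Fin k => if (idx k c i0).1 + 1 = a then 1 else 0) := by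
  rw [X, psi, ExteriorAlgebra.map_apply_ι]
  rfl

lemma psi_X_zero (k : ℕ) (c : ℕ → Bool) (a : ℕ)
    (h : ∀ i0 : Fin k, (idx k c i0).1 + 1 ≠ a) : psi k c (X (2 * k) a) = 0 := by
  rw [psi_X]
  have : (fun i0 : Fin k => if (idx k c i0).1 + 1 = a then (1:ℂ) else 0) = 0 := by
    funext i0; simp [h i0]
  rw [this, map_zero]

lemma pair_zero (k : ℕ) (c : ℕ → Bool) (i : ℕ) (hi : 1 ≤ i) :
    psi k c (X (2 * k) (2 * i - 1) * X (2 * k) (2 * i)) = 0 := by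
  rw [map_mul]
  cases hc : c i with
  | true =>
    rw [psi_X_zero k c (2 * i) ?_, mul_zero]
    intro i0
    simp only [idx]
    split
    · omega
    · rename_i h
      have : i0.1 + 1 ≠ i := by intro he; rw [he, hc] at h; exact h rfl
      omega
  | false =>
    rw [psi_X_zero k c (2 * i - 1) ?_, zero_mul]
    intro i0
    simp only [idx]
    split
    · rename_i h
      have : i0.1 + 1 ≠ i := by intro he; rw [he, hc] at h; simp at h
      omega
    · omega

/-- the monomial determined by the choice function `c`. -/
def Mon (k : ℕ) (c : ℕ → Bool) : ExteriorAlgebra ℂ (Fin (2 * k) → ℂ) :=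
  ((List.range k).map (fun i => X (2 * k) (chosen c (i + 1)))).prod

lemma psi_Mon_self (k : ℕ) (c : ℕ → Bool) :
    psi k c (Mon k c) = ExteriorAlgebra.ιMulti ℂ k (⇑(Pi.basisFun ℂ (Fin k))) := by
  have hfun : ∀ i : Fin k,
      psi k c (X (2 * k) (chosen c (i.1 + 1))) =
        ExteriorAlgebra.ι ℂ (Pi.basisFun ℂ (Fin k) i) := by
    intro i
    rw [psi_X]
    congr 1
    funext i0
    rw [Pi.basisFun_apply, Pi.single_apply]
    by_cases h : i0 = i
    · subst h
      have hc : (idx k c i0).1 + 1 = chosen c (i0.1 + 1) := by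
        simp only [idx, chosen]; split <;> omega
      rw [if_pos hc, if_pos rfl]
    · have hv : i0.1 ≠ i.1 := fun hh => h (Fin.ext hh)
      rw [if_neg ?_, if_neg h]
      simp only [idx, chosen]
      split <;> split <;> omega
  rw [Mon, map_list_prod, List.map_map, ExteriorAlgebra.ιMulti_apply,
    List.ofFn_eq_map, ← (show (List.finRange k).map Fin.val = List.range k from
      List.ext_getElem (by simp) (by simp)), List.map_map]
  exact congrArg List.prod (List.map_congr_left (fun i _ => hfun i))

lemma psi_Mon_ne (k : ℕ) (c c' : ℕ → Bool) (i : ℕ) (hik : i < k)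
    (hne : c (i + 1) ≠ c' (i + 1)) : psi k c (Mon k c') = 0 := by
  rw [Mon, map_list_prod, List.map_map]
  apply List.prod_eq_zero
  refine List.mem_map.2 ⟨i, List.mem_range.2 hik, psi_X_zero k c (chosen c' (i + 1)) ?_⟩
  intro i0
  simp only [idx, chosen]
  by_cases hv : i0.1 = i
  · rw [hv]
    cases hc : c (i + 1) <;> cases hc' : c' (i + 1) <;>
      simp [hc, hc'] at hne ⊢ <;> omega
  · split <;> split <;> omega

/-- family of alternating maps: det in degree `k`, `0` elsewhere. -/
def F (k : ℕ) : ∀ n : ℕ, (Fin k → ℂ) [⋀^Fin n]→ₗ[ℂ] ℂ :=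
  fun n => if h : n = k then h ▸ (Pi.basisFun ℂ (Fin k)).det else 0

lemma F_k (k : ℕ) : F k k = (Pi.basisFun ℂ (Fin k)).det := by
  simp [F]

/-- functional on `E_{2k}` killing the ideal, detecting the monomial `Mon k c`. -/
def Phi (k : ℕ) (c : ℕ → Bool) : ExteriorAlgebra ℂ (Fin (2 * k) → ℂ) →ₗ[ℂ] ℂ :=
  ExteriorAlgebra.liftAlternating (F k) ∘ₗ (psi k c).toLinearMap

lemma Phi_Mon_self (k : ℕ) (c : ℕ → Bool) : Phi k c (Mon k c) = 1 := by
  rw [Phi, LinearMap.comp_apply, AlgHom.toLinearMap_apply, psi_Mon_self,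
    ExteriorAlgebra.liftAlternating_apply_ιMulti, F_k, Module.Basis.det_self]

lemma Phi_Mon_ne (k : ℕ) (c c' : ℕ → Bool) (i : ℕ) (hik : i < k)
    (hne : c (i + 1) ≠ c' (i + 1)) : Phi k c (Mon k c') = 0 := by
  rw [Phi, LinearMap.comp_apply, AlgHom.toLinearMap_apply, psi_Mon_ne k c c' i hik hne,
    map_zero]

lemma Mon_eq (k : ℕ) (c : ℕ → Bool) :
    Mon k c = (((List.range k).map (fun i => chosen c (i + 1))).map (X (2 * k))).prod := by
  rw [Mon, List.map_map]
  exact congrArg List.prod (List.map_congr_left fun a _ => rfl)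

end Stmt14Aux

def extb (k : ℕ) (c : Fin k → Bool) : ℕ → Bool :=
  fun n => if h : n - 1 < k then c ⟨n - 1, h⟩ else false

lemma extb_succ (k : ℕ) (c : Fin k → Bool) (i : Fin k) : extb k c (i.1 + 1) = c i := by
  simp [extb]



open Stmt14Aux

/-- in `E_{2k}` with `f = Σ αᵢ x_{2i-1} x_{2i}` and
`g = Σ x_{2i-1} x_{2i}` (the `αᵢ` nonzero and pairwise distinct), every monomial
`y_1 ⋯ y_k` with `yᵢ ∈ {x_{2i-1}, x_{2i}}` lies outside the ideal `(f,g)`; hence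
`dim (E_{2k}/(f,g))_k ≥ 2^k`. -/
theorem stmt14 (k : ℕ) (α : ℕ → ℂ)
    (hne : ∀ i ∈ Finset.Icc 1 k, α i ≠ 0)
    (hdist : ∀ i ∈ Finset.Icc 1 k, ∀ j ∈ Finset.Icc 1 k, i ≠ j → α i ≠ α j)
    (f g : ExteriorAlgebra ℂ (Fin (2 * k) → ℂ))
    (hf : f = ∑ i ∈ Finset.Icc 1 k, α i • (X (2 * k) (2 * i - 1) * X (2 * k) (2 * i)))
    (hg : g = ∑ i ∈ Finset.Icc 1 k, X (2 * k) (2 * i - 1) * X (2 * k) (2 * i)) :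
    (∀ c : ℕ → Bool,
      ((List.range k).map
          (fun i => X (2 * k) (if c (i + 1) then 2 * (i + 1) - 1 else 2 * (i + 1)))).prod
        ∉ idl (2 * k) f g) ∧
    (2 ^ k : Cardinal) ≤
      Module.rank ℂ (Submodule.map (idl (2 * k) f g).mkQ (comp (2 * k) k)) := by
  have hfz : ∀ c : ℕ → Bool, psi k c f = 0 := by
    intro c
    rw [hf, map_sum]
    refine Finset.sum_eq_zero fun i hi => ?_
    rw [map_smul, pair_zero k c i (mem_Icc.mp hi).1, smul_zero]
  have hgz : ∀ c : ℕ → Bool, psi k c g = 0 := by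
    intro c
    rw [hg, map_sum]
    refine Finset.sum_eq_zero fun i hi => ?_
    rw [pair_zero k c i (mem_Icc.mp hi).1]
  have hker : ∀ c : ℕ → Bool, idl (2 * k) f g ≤ LinearMap.ker (Phi k c) := by
    intro c
    rw [idl]
    refine Submodule.span_le.2 ?_
    rintro x ⟨u, v, h | h⟩ <;> subst h <;>
      simp [LinearMap.mem_ker, Phi, map_mul, hfz c, hgz c]
  have hMon : ∀ c : ℕ → Bool,
      ((List.range k).map
        (fun i => X (2 * k) (if c (i + 1) then 2 * (i + 1) - 1 else 2 * (i + 1)))).prod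
        = Mon k c := fun _ => rfl
  constructor
  · intro c hmem
    have h0 : Phi k c (Mon k c) = 0 := LinearMap.mem_ker.1 (hker c ((hMon c) ▸ hmem))
    rw [Phi_Mon_self] at h0
    exact one_ne_zero h0
  · have hmemS : ∀ c : Fin k → Bool, Mon k (extb k c) ∈ comp (2 * k) k := by
      intro c
      rw [comp]
      refine Submodule.subset_span
        ⟨(List.range k).map (fun i => chosen (extb k c) (i + 1)), by simp, ?_, ?_, ?_⟩
      · rw [List.Chain', List.isChain_map, List.isChain_iff_getElem]
        intro j hj
        simp only [List.length_map, List.length_range] at hj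
        simp only [List.get_eq_getElem, List.getElem_range]
        simp only [chosen]
        split <;> split <;> omega
      · intro i hi
        obtain ⟨j, hj, rfl⟩ := List.mem_map.1 hi
        rw [List.mem_range] at hj
        simp only [chosen]
        split <;> omega
      · exact Mon_eq k (extb k c)
    have hfamily : LinearIndependent ℂ (fun c : Fin k → Bool =>
        (idl (2 * k) f g).mkQ (Mon k (extb k c))) := by
      let T : (ExteriorAlgebra ℂ (Fin (2 * k) → ℂ) ⧸ idl (2 * k) f g) →ₗ[ℂ]
          ((Fin k → Bool) → ℂ) :=
        LinearMap.pi (fun c => (idl (2 * k) f g).liftQ (Phi k (extb k c)) (hker (extb k c)))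
      have hT : ∀ c c' : Fin k → Bool,
          T ((idl (2 * k) f g).mkQ (Mon k (extb k c))) c' = (Pi.single c (1 : ℂ) : (Fin k → Bool) → ℂ) c' := by
        intro c c'
        simp only [T, LinearMap.pi_apply, Submodule.liftQ_apply, Submodule.mkQ_apply]
        by_cases hcc : c' = c
        · subst hcc; rw [Phi_Mon_self, Pi.single_eq_same]
        · obtain ⟨i, hi⟩ := Function.ne_iff.1 hcc
          rw [Phi_Mon_ne k (extb k c') (extb k c) i.1 i.isLt
            (by rw [extb_succ, extb_succ]; exact hi), Pi.single_eq_of_ne hcc]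
      have h1 : LinearIndependent ℂ (fun c : Fin k → Bool => Pi.single c (1 : ℂ)) := by
        have h2 := (Pi.basisFun ℂ (Fin k → Bool)).linearIndependent
        have h3 : ⇑(Pi.basisFun ℂ (Fin k → Bool)) = fun c => Pi.single c (1 : ℂ) :=
          funext fun c => Pi.basisFun_apply ℂ _ c
        rwa [h3] at h2
      refine LinearIndependent.of_comp T ?_
      have hcomp2 : (⇑T ∘ fun c : Fin k → Bool => (idl (2 * k) f g).mkQ (Mon k (extb k c)))
          = fun c => Pi.single c (1 : ℂ) := funext fun c => funext fun c' => hT c c'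
      rw [hcomp2]
      exact h1
    set S := Submodule.map (idl (2 * k) f g).mkQ (comp (2 * k) k) with hS
    have hli : LinearIndependent ℂ (fun c : Fin k → Bool =>
        (⟨(idl (2 * k) f g).mkQ (Mon k (extb k c)),
          Submodule.mem_map_of_mem (hmemS c)⟩ : S)) := by
      refine LinearIndependent.of_comp S.subtype ?_
      exact hfamily
    have hcard := hli.cardinal_le_rank
    have hmk : Cardinal.mk (Fin k → Bool) = (2 ^ k : Cardinal) := by
      rw [Cardinal.mk_fintype]
      norm_num [Fintype.card_fun]
    exact le_of_eq_of_le hmk.symm hcard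
end
end

section
/- Let f be a quadratic form in the exterior algebra E_n such that the principal ideal (f) satisfies dim (E_n/(f))_i = max(0, binomial(n,i) − binomial(n, i−2)) for all i (i.e., its Hilbert series is [(1+t)^n (1−t²)]). Then for any further quadratic form g, dim (E_n/(f,g))_{i+2} ≥ max(0, dim (E_n/(f))_{i+2} − dim (E_n/(f))_i) for all i; equivalently, the Hilbert series of E_n/(f,g) is coefficient-wise at least [(1+t)^n (1−t²)²]. -/
open Finset
noncomputable section

namespace Stmt15Aux

open ExteriorAlgebra

abbrev E (n : ℕ) := ExteriorAlgebra ℂ (Fin n → ℂ)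

abbrev G (n s : ℕ) : Submodule ℂ (E n) :=
  (LinearMap.range (ι ℂ : (Fin n → ℂ) →ₗ[ℂ] E n)) ^ s

def compGE (n k s : ℕ) : Submodule ℂ (E n) :=
  Submodule.span ℂ { m | ∃ l : List ℕ, l.length = s ∧ l.Chain' (· < ·) ∧
    (∀ i ∈ l, k ≤ i ∧ i ≤ n) ∧ m = (l.map (X n)).prod }

lemma comp_eq_compGE (n s : ℕ) : comp n s = compGE n 1 s := rfl

lemma X_anticomm (n i j : ℕ) : X n i * X n j = -(X n j * X n i) :=
  eq_neg_of_add_eq_zero_left (ι_add_mul_swap _ _)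

lemma X_sq (n i : ℕ) : X n i * X n i = 0 := ι_sq_zero _

lemma prepend {n k a s : ℕ} (hka : k ≤ a) (han : a ≤ n) {x : E n}
    (hx : x ∈ compGE n (a + 1) s) : X n a * x ∈ compGE n k (s + 1) := by
  induction hx using Submodule.span_induction with
  | mem m hm =>
    obtain ⟨l, hlen, hch, hbd, rfl⟩ := hm
    refine Submodule.subset_span ⟨a :: l, by simp [hlen], ?_, ?_, by simp⟩
    · refine List.isChain_cons.mpr ⟨?_, hch⟩
      intro b hb
      exact lt_of_lt_of_le (Nat.lt_succ_self a) (hbd b (List.mem_of_mem_head? hb)).1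
    · intro i hi
      rcases List.mem_cons.mp hi with rfl | hi'
      · exact ⟨hka, han⟩
      · exact ⟨le_trans (le_trans hka (Nat.le_succ a)) (hbd i hi').1, (hbd i hi').2⟩
  | zero => simpa using Submodule.zero_mem _
  | add x y hx hy ihx ihy => rw [mul_add]; exact Submodule.add_mem _ ihx ihy
  | smul c x hx ihx => rw [mul_smul_comm]; exact Submodule.smul_mem _ _ ihx

lemma insert_lemma (n : ℕ) : ∀ (l : List ℕ) (k : ℕ), l.Pairwise (· < ·) →
    (∀ j ∈ l, k ≤ j ∧ j ≤ n) → ∀ i, k ≤ i → i ≤ n →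
    X n i * (l.map (X n)).prod ∈ compGE n k (l.length + 1) := by
  intro l
  induction l with
  | nil =>
    intro k _ _ i hki hin
    refine Submodule.subset_span ⟨[i], rfl, List.isChain_singleton i, ?_, by simp⟩
    intro j hj
    rcases List.mem_singleton.mp hj with rfl
    exact ⟨hki, hin⟩
  | cons a t ih =>
    intro k hp hbd i hki hin
    have hat : ∀ b ∈ t, a < b := fun b hb => (List.pairwise_cons.mp hp).1 b hb
    have hpt : t.Pairwise (· < ·) := (List.pairwise_cons.mp hp).2
    rcases lt_trichotomy i a with hlt | rfl | hgt
    · refine Submodule.subset_span ⟨i :: a :: t, by simp, ?_, ?_, by simp⟩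
      · refine List.isChain_iff_pairwise.mpr (List.pairwise_cons.mpr ⟨?_, hp⟩)
        intro b hb
        rcases List.mem_cons.mp hb with rfl | hb'
        · exact hlt
        · exact lt_trans hlt (hat b hb')
      · intro j hj
        rcases List.mem_cons.mp hj with rfl | hj'
        · exact ⟨hki, hin⟩
        · exact hbd j hj'
    · rw [List.map_cons, List.prod_cons, ← mul_assoc, X_sq, zero_mul]
      exact Submodule.zero_mem _
    · have h1 : X n i * ((a :: t).map (X n)).prod
          = -(X n a * (X n i * (t.map (X n)).prod)) := by
        rw [List.map_cons, List.prod_cons, ← mul_assoc, X_anticomm n i a, neg_mul, mul_assoc]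
      rw [h1]
      have h2 : X n i * (t.map (X n)).prod ∈ compGE n (a + 1) (t.length + 1) :=
        ih (a + 1) hpt (fun j hj => ⟨hat j hj, (hbd j (List.mem_cons_of_mem a hj)).2⟩)
          i hgt hin
      have h3 := prepend (hbd a (by simp)).1 (hbd a (by simp)).2 h2
      simpa using Submodule.neg_mem _ h3

lemma X_mul_mem {n k i s : ℕ} (hki : k ≤ i) (hin : i ≤ n) {x : E n}
    (hx : x ∈ compGE n k s) : X n i * x ∈ compGE n k (s + 1) := by
  induction hx using Submodule.span_induction with
  | mem m hm =>
    obtain ⟨l, rfl, hch, hbd, rfl⟩ := hm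
    exact insert_lemma n l k (List.isChain_iff_pairwise.mp hch) hbd i hki hin
  | zero => simpa using Submodule.zero_mem _
  | add x y hx hy ihx ihy => rw [mul_add]; exact Submodule.add_mem _ ihx ihy
  | smul c x hx ihx => rw [mul_smul_comm]; exact Submodule.smul_mem _ _ ihx

lemma one_mem_comp (n : ℕ) : (1 : E n) ∈ comp n 0 :=
  Submodule.subset_span ⟨[], rfl, List.isChain_nil, by simp, by simp⟩

lemma X_eq_iota_single (n : ℕ) (j : Fin n) :
    X n ((j : ℕ) + 1) = ι ℂ (Pi.single j 1) := by
  unfold X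
  congr 1
  funext j'
  simp only [Pi.single_apply]
  by_cases h : j' = j
  · subst h; simp
  · rw [if_neg (by simpa using fun hh => h (Fin.val_injective hh)), if_neg h]

lemma iota_eq_sum (n : ℕ) (v : Fin n → ℂ) :
    ι ℂ v = ∑ j : Fin n, v j • X n ((j : ℕ) + 1) := by
  have : v = ∑ j : Fin n, v j • (Pi.single j 1 : Fin n → ℂ) := by
    funext j'
    simp [Pi.single_apply]
  conv_lhs => rw [this]
  rw [map_sum]
  refine Finset.sum_congr rfl fun j _ => ?_
  rw [X_eq_iota_single, map_smul]

lemma G_le_comp (n s : ℕ) : G n s ≤ comp n s := by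
  intro x hx
  induction hx using Submodule.pow_induction_on_left' with
  | algebraMap r =>
    rw [Algebra.algebraMap_eq_smul_one]
    exact Submodule.smul_mem _ _ (one_mem_comp n)
  | add x y i hx hy ihx ihy => exact Submodule.add_mem _ ihx ihy
  | mem_mul m hm i x hx ihx =>
    obtain ⟨v, rfl⟩ := hm
    rw [iota_eq_sum, Finset.sum_mul]
    refine Submodule.sum_mem _ fun j _ => ?_
    rw [smul_mul_assoc]
    refine Submodule.smul_mem _ _ ?_
    rw [comp_eq_compGE] at ihx ⊢
    exact X_mul_mem (Nat.succ_le_succ (Nat.zero_le _)) (Nat.succ_le_of_lt j.isLt) ihx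

lemma comp_le_G (n s : ℕ) : comp n s ≤ G n s := by
  rw [comp, Submodule.span_le]
  rintro m ⟨l, rfl, -, -, rfl⟩
  show (l.map (X n)).prod ∈ G n l.length
  induction l with
  | nil => exact Submodule.mem_one.mpr ⟨1, by simp⟩
  | cons a t ih =>
    rw [List.map_cons, List.prod_cons, List.length_cons]
    have hX : X n a ∈ LinearMap.range (ι ℂ : (Fin n → ℂ) →ₗ[ℂ] E n) := ⟨_, rfl⟩
    have h := Submodule.mul_mem_mul hX ih
    rw [← pow_succ'] at h
    exact h

lemma comp_eq_G (n s : ℕ) : comp n s = G n s :=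
  le_antisymm (comp_le_G n s) (G_le_comp n s)

lemma ι_mul_ι_central (n : ℕ) (u v : Fin n → ℂ) (x : E n) :
    (ι ℂ u * ι ℂ v) * x = x * (ι ℂ u * ι ℂ v) := by
  have h1 : ∀ p q : Fin n → ℂ, ι ℂ p * ι ℂ q = -((ι ℂ q) * (ι ℂ p)) := fun p q =>
    eq_neg_of_add_eq_zero_left (ι_add_mul_swap p q)
  induction x using ExteriorAlgebra.induction with
  | algebraMap r => exact (Algebra.commutes r _).symm
  | ι w => rw [mul_assoc, h1 v w, mul_neg, ← mul_assoc, h1 u w, neg_mul, neg_neg, mul_assoc]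
  | add a b ha hb => rw [mul_add, add_mul, ha, hb]
  | mul a b ha hb => rw [← mul_assoc, ha, mul_assoc, hb, ← mul_assoc]

lemma central_of_mem_comp2 {n : ℕ} {h : E n} (hh : h ∈ comp n 2) (x : E n) :
    h * x = x * h := by
  induction hh using Submodule.span_induction with
  | mem m hm =>
    obtain ⟨l, hlen, -, -, rfl⟩ := hm
    obtain ⟨a, b, rfl⟩ := List.length_eq_two.mp hlen
    have : ((([a, b]).map (X n)).prod) = X n a * X n b := by simp
    rw [this]
    exact ι_mul_ι_central n _ _ x
  | zero => rw [zero_mul, mul_zero]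
  | add y z hy hz ihy ihz => rw [add_mul, mul_add, ihy, ihz]
  | smul c y hy ihy => rw [smul_mul_assoc, mul_smul_comm, ihy]

lemma idl_eq {n : ℕ} (f g : E n) (hf : ∀ x, f * x = x * f) (hg : ∀ x, g * x = x * g) :
    idl n f g = LinearMap.range (LinearMap.mulLeft ℂ f) ⊔
      LinearMap.range (LinearMap.mulLeft ℂ g) := by
  apply le_antisymm
  · rw [idl, Submodule.span_le]
    rintro x ⟨u, v, h | h⟩ <;> subst h
    · exact Submodule.mem_sup_left ⟨u * v, by rw [LinearMap.mulLeft_apply, ← mul_assoc, hf u]⟩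
    · exact Submodule.mem_sup_right ⟨u * v, by rw [LinearMap.mulLeft_apply, ← mul_assoc, hg u]⟩
  · apply sup_le <;> rintro x ⟨w, rfl⟩
    · exact Submodule.subset_span ⟨1, w, Or.inl (by simp)⟩
    · exact Submodule.subset_span ⟨1, w, Or.inr (by simp)⟩

lemma idl_ff_eq {n : ℕ} (f : E n) (hf : ∀ x, f * x = x * f) :
    idl n f f = LinearMap.range (LinearMap.mulLeft ℂ f) := by
  rw [idl_eq f f hf hf, sup_idem]

-- Projections from the grading
def P (n j : ℕ) : E n →+ E n := GradedRing.proj (fun i : ℕ => ⋀[ℂ]^i (Fin n → ℂ)) j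

lemma P_mem (n j : ℕ) (x : E n) : P n j x ∈ G n j := by
  rw [P, GradedRing.proj_apply]
  exact (DirectSum.decompose (fun i : ℕ => ⋀[ℂ]^i (Fin n → ℂ)) x j).2

lemma P_of_mem_same {n j : ℕ} {x : E n} (hx : x ∈ G n j) : P n j x = x := by
  rw [P, GradedRing.proj_apply]
  exact DirectSum.decompose_of_mem_same _ hx

lemma P_of_mem_ne {n m j : ℕ} {x : E n} (hx : x ∈ G n m) (hne : m ≠ j) : P n j x = 0 := by
  rw [P, GradedRing.proj_apply]
  exact DirectSum.decompose_of_mem_ne _ hx hne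

lemma P_mul2 {n : ℕ} {h : E n} (hh : h ∈ G n 2) (j : ℕ) (x : E n) :
    P n (j + 2) (h * x) = h * P n j x := by
  refine DirectSum.Decomposition.inductionOn (fun i : ℕ => ⋀[ℂ]^i (Fin n → ℂ))
    (motive := fun x => P n (j + 2) (h * x) = h * P n j x) ?_ ?_ ?_ x
  · show P n (j + 2) (h * 0) = h * P n j 0
    rw [mul_zero, map_zero, map_zero, mul_zero]
  · intro s m
    have hm : (m : E n) ∈ G n s := m.2
    by_cases hs : s = j
    · subst hs
      have hmul : h * (m : E n) ∈ G n (s + 2) := by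
        have := Submodule.mul_mem_mul hh hm
        rw [← pow_add] at this
        rwa [add_comm 2 s] at this
      rw [P_of_mem_same hmul, P_of_mem_same hm]
    · have hmul : h * (m : E n) ∈ G n (s + 2) := by
        have := Submodule.mul_mem_mul hh hm
        rw [← pow_add] at this
        rwa [add_comm 2 s] at this
      rw [P_of_mem_ne hmul (by omega), P_of_mem_ne hm hs, mul_zero]
  · intro a b ha hb
    rw [mul_add, map_add, map_add, ha, hb, mul_add]

lemma comp_finiteDimensional (n s : ℕ) : Module.Finite ℂ (comp n s) := by
  apply FiniteDimensional.span_of_finite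
  have h1 : {l : List ℕ | l.length = s ∧ ∀ j ∈ l, j ≤ n}.Finite := by
    refine Set.Finite.subset ((List.finite_length_eq (Fin (n + 1)) s).image
      (List.map Fin.val)) ?_
    rintro l ⟨hlen, hbd⟩
    refine ⟨l.attach.map (fun a => (⟨a.1, Nat.lt_succ_of_le (hbd a.1 a.2)⟩ : Fin (n + 1))),
      by simp [hlen], ?_⟩
    rw [List.map_map]
    simp
  refine Set.Finite.subset (h1.image (fun l => (l.map (X n)).prod)) ?_
  rintro m ⟨l, hlen, -, hbd, rfl⟩
  exact ⟨l, ⟨hlen, fun j hj => (hbd j hj).2⟩, rfl⟩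

end Stmt15Aux

set_option maxHeartbeats 1000000 in
open Stmt15Aux in
/-- if the quadratic form `f ∈ (E_n)_2` satisfies
`dim (E_n/(f))_i = max 0 (C(n,i) - C(n,i-2))` for all `i` (i.e. the Hilbert series of
`E_n/(f)` is `[(1+t)^n (1-t²)]`), then for any further quadratic form `g ∈ (E_n)_2`,
`dim (E_n/(f,g))_{i+2} ≥ max 0 (dim (E_n/(f))_{i+2} - dim (E_n/(f))_i)` for all `i`;
i.e. the Hilbert series of `E_n/(f,g)` is coefficient-wise at least
`[(1+t)^n (1-t²)²]`. -/
theorem stmt15 (n : ℕ) (f g : ExteriorAlgebra ℂ (Fin n → ℂ))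
    (hf2 : f ∈ comp n 2) (hg2 : g ∈ comp n 2)
    (hHilb : ∀ i : ℕ,
      (Module.finrank ℂ (Submodule.map (idl n f f).mkQ (comp n i)) : ℤ) =
        max 0 ((n.choose i : ℤ) - (binom n ((i : ℤ) - 2) : ℤ))) :
    ∀ i : ℕ,
      Module.finrank ℂ (Submodule.map (idl n f g).mkQ (comp n (i + 2))) ≥
        Module.finrank ℂ (Submodule.map (idl n f f).mkQ (comp n (i + 2))) -
          Module.finrank ℂ (Submodule.map (idl n f f).mkQ (comp n i)) := by
  intro i
  have hfc := central_of_mem_comp2 hf2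
  have hgc := central_of_mem_comp2 hg2
  have hIeq : idl n f f = LinearMap.range (LinearMap.mulLeft ℂ f) := idl_ff_eq f hfc
  have hJeq : idl n f g = LinearMap.range (LinearMap.mulLeft ℂ f) ⊔
      LinearMap.range (LinearMap.mulLeft ℂ g) := idl_eq f g hfc hgc
  set I := idl n f f with hI
  set J := idl n f g with hJ
  have hfG : f ∈ G n 2 := by rw [← comp_eq_G]; exact hf2
  have hgG : g ∈ G n 2 := by rw [← comp_eq_G]; exact hg2
  have hIJ : I ≤ J := by rw [hIeq, hJeq]; exact le_sup_left
  let q : (E n ⧸ I) →ₗ[ℂ] E n ⧸ J :=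
    Submodule.mapQ I J LinearMap.id (by simpa using hIJ)
  have hq : ∀ x : E n, q (I.mkQ x) = J.mkQ x := fun x => by
    simp [q, Submodule.mapQ_apply]
  have hcomp : q.comp I.mkQ = J.mkQ := LinearMap.ext fun x => hq x
  have hmap : Submodule.map J.mkQ (comp n (i + 2)) =
      Submodule.map q (Submodule.map I.mkQ (comp n (i + 2))) := by
    rw [← Submodule.map_comp, hcomp]
  have hgI : ∀ x ∈ I, g * x ∈ I := by
    rw [hIeq]
    rintro _ ⟨w, rfl⟩
    exact ⟨g * w, by rw [LinearMap.mulLeft_apply, LinearMap.mulLeft_apply, ← mul_assoc,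
      ← hgc f, mul_assoc]⟩
  let gbar : (E n ⧸ I) →ₗ[ℂ] E n ⧸ I :=
    Submodule.mapQ I I (LinearMap.mulLeft ℂ g) (fun x hx => hgI x hx)
  have hgbar : ∀ x : E n, gbar (I.mkQ x) = I.mkQ (g * x) := fun x => by
    simp [gbar, Submodule.mapQ_apply]
    rfl
  have hker : LinearMap.ker q = Submodule.map I.mkQ J := by
    ext x
    constructor
    · intro hx
      obtain ⟨y, rfl⟩ := Submodule.mkQ_surjective I x
      rw [LinearMap.mem_ker, hq] at hx
      exact ⟨y, (Submodule.Quotient.mk_eq_zero J).mp (by simpa using hx), rfl⟩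
    · rintro ⟨y, hy, rfl⟩
      rw [LinearMap.mem_ker, hq]
      simpa using (Submodule.Quotient.mk_eq_zero J).mpr hy
  set V2 := Submodule.map I.mkQ (comp n (i + 2)) with hV2
  set V0 := Submodule.map I.mkQ (comp n i) with hV0
  have hkey : V2 ⊓ LinearMap.ker q ≤ Submodule.map gbar V0 := by
    rintro ξ ⟨hξ2, hξk⟩
    rw [hker] at hξk
    obtain ⟨c, hc, hcξ⟩ := hξ2
    obtain ⟨w, hw, hwξ⟩ := hξk
    have hcw : c - w ∈ I := by
      have h0 : I.mkQ (c - w) = 0 := by rw [map_sub, hcξ, hwξ, sub_self]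
      exact (Submodule.Quotient.mk_eq_zero I).mp (by simpa using h0)
    rw [hJeq] at hw
    obtain ⟨w1, hw1, w2, hw2, hww⟩ := Submodule.mem_sup.mp hw
    obtain ⟨u, rfl⟩ := hw1
    obtain ⟨v, rfl⟩ := hw2
    rw [LinearMap.mulLeft_apply] at hww
    rw [LinearMap.mulLeft_apply] at hww
    subst hww
    have hfuI : f * u ∈ I := hIeq ▸ ⟨u, rfl⟩
    have hyI : c - g * v ∈ I := by
      have h2 := add_mem hcw hfuI
      have h3 : c - (f * u + g * v) + f * u = c - g * v := by abel
      rwa [h3] at h2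
    have hcG : c ∈ G n (i + 2) := comp_le_G n (i + 2) hc
    have hPI : ∀ y ∈ I, P n (i + 2) y ∈ I := by
      intro y hy
      rw [hIeq] at hy ⊢
      obtain ⟨u', rfl⟩ := hy
      refine ⟨P n i u', ?_⟩
      rw [LinearMap.mulLeft_apply, LinearMap.mulLeft_apply]
      exact (P_mul2 hfG i u').symm
    have heq : c = g * P n i v + P n (i + 2) (c - g * v) := by
      have h1 : P n (i + 2) c = c := P_of_mem_same hcG
      have h2 : P n (i + 2) (g * v) = g * P n i v := P_mul2 hgG i v
      calc c = P n (i + 2) c := h1.symm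
        _ = P n (i + 2) ((c - g * v) + g * v) := by rw [sub_add_cancel]
        _ = P n (i + 2) (c - g * v) + P n (i + 2) (g * v) := (P n (i + 2)).map_add (c - g * v) (g * v)
        _ = g * P n i v + P n (i + 2) (c - g * v) := by rw [h2, add_comm]
    have hPv : P n i v ∈ comp n i := by rw [comp_eq_G]; exact P_mem n i v
    refine ⟨I.mkQ (P n i v), ⟨P n i v, hPv, rfl⟩, ?_⟩
    rw [hgbar, ← hcξ]
    have hdiff : c - g * P n i v ∈ I := by
      have := hPI _ hyI
      have h4 : c - g * P n i v = P n (i + 2) (c - g * v) := by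
        conv_lhs => rw [heq]
        abel
      rwa [h4]
    symm
    rw [Submodule.mkQ_apply, Submodule.mkQ_apply]
    exact (Submodule.Quotient.eq I).mpr hdiff
  haveI : Module.Finite ℂ (comp n (i + 2)) := comp_finiteDimensional n (i + 2)
  haveI : Module.Finite ℂ (comp n i) := comp_finiteDimensional n i
  haveI : Module.Finite ℂ V2 := Module.Finite.map _ _
  haveI : Module.Finite ℂ V0 := Module.Finite.map _ _
  haveI : Module.Finite ℂ (Submodule.map gbar V0) := Module.Finite.map _ _
  let r := q.domRestrict V2
  have hrank := LinearMap.finrank_range_add_finrank_ker r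
  have hr : LinearMap.range r = Submodule.map q V2 := LinearMap.range_domRestrict V2 q
  have hkerr : Module.finrank ℂ (LinearMap.ker r) =
      Module.finrank ℂ ↥(V2 ⊓ LinearMap.ker q) := by
    show Module.finrank ℂ (LinearMap.ker (q.domRestrict V2)) = _
    rw [LinearMap.ker_domRestrict]
    rw [← Submodule.finrank_map_subtype_eq V2 (Submodule.comap V2.subtype (LinearMap.ker q)),
      Submodule.map_comap_subtype]
  have hle : Module.finrank ℂ ↥(V2 ⊓ LinearMap.ker q) ≤ Module.finrank ℂ V0 :=
    le_trans (Submodule.finrank_mono hkey) (Submodule.finrank_map_le gbar V0)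
  have hfinal : Module.finrank ℂ ↥(Submodule.map q V2) +
      Module.finrank ℂ ↥(V2 ⊓ LinearMap.ker q) = Module.finrank ℂ ↥V2 := by
    rw [← hr, ← hkerr]
    exact hrank
  have hgoal : Module.finrank ℂ ↥V2 - Module.finrank ℂ ↥V0 ≤
      Module.finrank ℂ ↥(Submodule.map q V2) := by omega
  rw [hmap]
  exact hgoal
end
end

section
/- Let A and B be skew-symmetric n×n complex matrices with n = 2k+1 odd such that both A and B have (maximal possible) rank 2k and the pencil A + λB has rank 2k for all λ ∈ ℂ. If A + λB is strictly congruent to the single odd canonical block M_{I,2k+1}, then the associated quadratic forms x^t A x and x^t B x in the exterior algebra E_{2k+1} can be brought, by an invertible linear change of variables, to the pair f = Σ_{i=1}^k x_i x_{k+1+i} and g = Σ_{i=1}^k x_i x_{k+i}. -/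
open Finset
noncomputable section

/-- The matrix `A_I` of the odd canonical block `M_{I,2k+1} = A_I + λ B_I`:
(1-indexed) `A_I[i, 2k+1-i] = 1` and `A_I[2k+1-i, i] = -1` for `1 ≤ i ≤ k`,
so that `yᵀ A_I y = 2(y_1 y_{2k} + ⋯ + y_k y_{k+1})`. -/
def AI (k : ℕ) : Matrix (Fin (2 * k + 1)) (Fin (2 * k + 1)) ℂ :=
  fun i j => if (i : ℕ) + (j : ℕ) + 1 = 2 * k then (if (i : ℕ) < k then 1 else -1) else 0

/-- The matrix `B_I` of the odd canonical block: (1-indexed) `B_I[i, 2k+2-i] = 1` and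
`B_I[2k+2-i, i] = -1` for `1 ≤ i ≤ k`, so that
`yᵀ B_I y = 2(y_1 y_{2k+1} + ⋯ + y_k y_{k+2})`. -/
def BI (k : ℕ) : Matrix (Fin (2 * k + 1)) (Fin (2 * k + 1)) ℂ :=
  fun i j => if (i : ℕ) + (j : ℕ) = 2 * k ∧ (i : ℕ) ≠ k
    then (if (i : ℕ) < k then 1 else -1) else 0

/-- The quadratic form `xᵀ A x = Σ_{i,j} A_{ij} x_i x_j` in the exterior algebra `E_n`
associated to a skew-symmetric matrix `A`. -/
def qf (n : ℕ) (A : Matrix (Fin n) (Fin n) ℂ) : ExteriorAlgebra ℂ (Fin n → ℂ) :=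
  ∑ i : Fin n, ∑ j : Fin n, A i j • (X n ((i : ℕ) + 1) * X n ((j : ℕ) + 1))

lemma X_anticomm (n a b : ℕ) : X n a * X n b = -(X n b * X n a) := by
  have h := ExteriorAlgebra.ι_sq_zero (R := ℂ)
    ((fun j : Fin n => if (j:ℕ)+1 = a then (1:ℂ) else 0) +
     (fun j : Fin n => if (j:ℕ)+1 = b then (1:ℂ) else 0))
  rw [map_add, add_mul, mul_add, mul_add, ExteriorAlgebra.ι_sq_zero,
    ExteriorAlgebra.ι_sq_zero, zero_add, add_zero] at h
  exact eq_neg_of_add_eq_zero_left h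

def tauS (k : ℕ) (a : Fin (2*k+1)) : Fin (2*k+1) :=
  if h : (a:ℕ) < k then a else ⟨3*k - (a:ℕ), by have := a.isLt; omega⟩

lemma tauS_coe (k : ℕ) (a : Fin (2*k+1)) :
    ((tauS k a : Fin (2*k+1)) : ℕ) = if (a:ℕ) < k then (a:ℕ) else 3*k - (a:ℕ) := by
  unfold tauS; split_ifs <;> rfl

def ccS (k : ℕ) (a : Fin (2*k+1)) : ℂ := if (a:ℕ) < k then 1/2 else 1

def Rm (k : ℕ) : Matrix (Fin (2*k+1)) (Fin (2*k+1)) ℂ :=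
  fun i a => if i = tauS k a then ccS k a else 0

def Sm (k : ℕ) : Matrix (Fin (2*k+1)) (Fin (2*k+1)) ℂ :=
  fun b i => if (i:ℕ) < k then (if b = i then 2 else 0)
    else (if (b:ℕ) + (i:ℕ) = 3*k then 1 else 0)

lemma SR (k : ℕ) : Sm k * Rm k = 1 := by
  ext b a
  rw [Matrix.mul_apply]
  simp only [Rm, mul_ite, mul_zero]
  rw [Finset.sum_ite_eq' Finset.univ (tauS k a) (fun i => Sm k b i * ccS k a)]
  rw [if_pos (Finset.mem_univ _)]
  have ha := a.isLt; have hb := b.isLt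
  rcases Nat.lt_or_ge (a:ℕ) k with h|h
  · have ht : tauS k a = a := by unfold tauS; rw [dif_pos h]
    rw [ht]
    simp only [Sm, ccS, Matrix.one_apply, h, if_true]
    split_ifs <;> norm_num
  · have ht : ((tauS k a):ℕ) = 3*k - (a:ℕ) := by rw [tauS_coe, if_neg (Nat.not_lt.2 h)]
    have h2 : ¬ ((tauS k a : Fin (2*k+1)):ℕ) < k := by omega
    simp only [Sm, ccS, Matrix.one_apply, if_neg (Nat.not_lt.2 h), ht, mul_one]
    have h3 : ¬ (3*k - (a:ℕ) < k) := by omega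
    rw [if_neg h3]
    split_ifs with h4 h5 h5
    · rfl
    · exact absurd (Fin.ext (show (b:ℕ) = (a:ℕ) by omega)) h5
    · exfalso; apply h4; have := congrArg Fin.val h5; omega
    · rfl

lemma RtMR (k : ℕ) (M : Matrix (Fin (2*k+1)) (Fin (2*k+1)) ℂ) (a b : Fin (2*k+1)) :
    ((Rm k).transpose * M * Rm k) a b = ccS k a * ccS k b * M (tauS k a) (tauS k b) := by
  rw [Matrix.mul_apply]
  have inner : ∀ j, ((Rm k).transpose * M) a j = ccS k a * M (tauS k a) j := by
    intro j
    rw [Matrix.mul_apply]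
    simp only [Matrix.transpose_apply, Rm, ite_mul, zero_mul]
    rw [Finset.sum_ite_eq' Finset.univ (tauS k a) (fun i => ccS k a * M i j)]
    simp
  simp only [inner, Rm, mul_ite, mul_zero]
  rw [Finset.sum_ite_eq' Finset.univ (tauS k b) (fun j => ccS k a * M (tauS k a) j * ccS k b)]
  simp only [Finset.mem_univ, if_pos]
  ring

def M1 (k d : ℕ) : Matrix (Fin (2*k+1)) (Fin (2*k+1)) ℂ :=
  fun i j => if (j:ℕ) = (i:ℕ) + d ∧ (i:ℕ) < k then (1/2 : ℂ) else 0

lemma RAIR (k : ℕ) : (Rm k).transpose * AI k * Rm k =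
    fun a b => M1 k (k+1) a b - M1 k (k+1) b a := by
  ext a b
  rw [RtMR]
  have ha := a.isLt; have hb := b.isLt
  simp only [AI, M1, ccS, tauS_coe]
  by_cases h1 : (a:ℕ) < k <;> by_cases h2 : (b:ℕ) < k <;>
    simp only [h1, h2, and_true, and_false, if_true, if_false] <;>
    split_ifs <;> first | omega | norm_num

lemma RBIR (k : ℕ) : (Rm k).transpose * BI k * Rm k =
    fun a b => M1 k k a b - M1 k k b a := by
  ext a b
  rw [RtMR]
  have ha := a.isLt; have hb := b.isLt
  simp only [BI, M1, ccS, tauS_coe]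
  by_cases h1 : (a:ℕ) < k <;> by_cases h2 : (b:ℕ) < k <;>
    simp only [h1, h2, and_true, and_false, if_true, if_false] <;>
    split_ifs <;> first | omega | norm_num

set_option maxHeartbeats 1000000 in
lemma qf_M (k d : ℕ) (hd1 : k ≤ d) (hd2 : d ≤ k + 1) :
    qf (2*k+1) (fun a b => M1 k d a b - M1 k d b a) =
      ∑ i ∈ Finset.Icc 1 k, X (2*k+1) i * X (2*k+1) (d + i) := by
  have hinner : ∀ i : Fin (2*k+1),
      (∑ j : Fin (2*k+1), M1 k d i j • (X (2*k+1) ((i:ℕ)+1) * X (2*k+1) ((j:ℕ)+1))) =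
      if (i:ℕ) < k then (1/2:ℂ) • (X (2*k+1) ((i:ℕ)+1) * X (2*k+1) ((i:ℕ)+d+1)) else 0 := by
    intro i
    by_cases hi : (i:ℕ) < k
    · rw [if_pos hi]
      have hlt : (i:ℕ) + d < 2*k+1 := by omega
      have key : ∀ j : Fin (2*k+1), M1 k d i j • (X (2*k+1) ((i:ℕ)+1) * X (2*k+1) ((j:ℕ)+1)) =
          if j = (⟨(i:ℕ)+d, hlt⟩ : Fin (2*k+1)) then
            (1/2:ℂ) • (X (2*k+1) ((i:ℕ)+1) * X (2*k+1) ((j:ℕ)+1)) else 0 := by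
        intro j
        by_cases hj : j = (⟨(i:ℕ)+d, hlt⟩ : Fin (2*k+1))
        · rw [if_pos hj]; subst hj; unfold M1; rw [if_pos ⟨rfl, hi⟩]
        · rw [if_neg hj]; unfold M1
          rw [if_neg, zero_smul]
          rintro ⟨hj1, -⟩
          exact hj (Fin.ext hj1)
      rw [Finset.sum_congr rfl (fun j _ => key j),
        Finset.sum_ite_eq' Finset.univ _
          (fun j : Fin (2*k+1) => (1/2:ℂ) • (X (2*k+1) ((i:ℕ)+1) * X (2*k+1) ((j:ℕ)+1)))]
      simp
    · rw [if_neg hi]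
      apply Finset.sum_eq_zero
      intro j _
      unfold M1
      rw [if_neg, zero_smul]
      rintro ⟨-, h⟩; exact hi h
  unfold qf
  simp only [sub_smul, Finset.sum_sub_distrib]
  have h2 : (∑ i : Fin (2*k+1), ∑ j : Fin (2*k+1),
        M1 k d j i • (X (2*k+1) ((i:ℕ)+1) * X (2*k+1) ((j:ℕ)+1)))
      = -∑ i : Fin (2*k+1), ∑ j : Fin (2*k+1),
        M1 k d i j • (X (2*k+1) ((i:ℕ)+1) * X (2*k+1) ((j:ℕ)+1)) := by
    rw [Finset.sum_comm]
    have hsw : ∀ x y : Fin (2*k+1), M1 k d x y • (X (2*k+1) ((y:ℕ)+1) * X (2*k+1) ((x:ℕ)+1))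
        = -(M1 k d x y • (X (2*k+1) ((x:ℕ)+1) * X (2*k+1) ((y:ℕ)+1))) := by
      intro x y
      rw [X_anticomm (2*k+1) ((y:ℕ)+1) ((x:ℕ)+1), smul_neg]
    simp_rw [hsw, Finset.sum_neg_distrib]
  rw [h2, sub_neg_eq_add]
  simp_rw [hinner]
  rw [← Finset.sum_add_distrib]
  have h3 : ∀ i : Fin (2*k+1),
      ((if (i:ℕ) < k then (1/2:ℂ) • (X (2*k+1) ((i:ℕ)+1) * X (2*k+1) ((i:ℕ)+d+1)) else 0) +
       (if (i:ℕ) < k then (1/2:ℂ) • (X (2*k+1) ((i:ℕ)+1) * X (2*k+1) ((i:ℕ)+d+1)) else 0)) =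
      (if (i:ℕ) < k then X (2*k+1) ((i:ℕ)+1) * X (2*k+1) ((i:ℕ)+d+1) else 0) := by
    intro i
    by_cases hik : (i:ℕ) < k
    · rw [if_pos hik, ← add_smul]
      have hh : (1/2 : ℂ) + 1/2 = 1 := by norm_num
      rw [hh, one_smul, if_pos hik]
    · rw [if_neg hik, add_zero, if_neg hik]
  simp_rw [h3]
  rw [Fin.sum_univ_eq_sum_range
    (fun m => if m < k then X (2*k+1) (m+1) * X (2*k+1) (m+d+1) else 0) (2*k+1)]
  rw [← Finset.sum_filter]
  have hf : (Finset.range (2*k+1)).filter (· < k) = Finset.range k := by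
    ext x; simp; omega
  rw [hf]
  have hIcc : Finset.Icc 1 k = Finset.Ico 1 (k+1) := by rw [Finset.Ico_add_one_right_eq_Icc]
  rw [hIcc, Finset.sum_Ico_eq_sum_range]
  simp only [Nat.add_sub_cancel]
  apply Finset.sum_congr rfl
  intro i _
  congr 1
  · congr 1; omega
  · congr 1; omega

/-- if `A`, `B` are skew-symmetric `(2k+1)×(2k+1)` complex matrices of
maximal rank `2k`, the pencil `A + λB` has rank `2k` for all `λ`, and `A + λB` is
strictly congruent to the single odd canonical block `M_{I,2k+1}`, then the associated
quadratic forms in `E_{2k+1}` can be brought, by an invertible change of variables, to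
`f = Σ_{i=1}^k x_i x_{k+1+i}` and `g = Σ_{i=1}^k x_i x_{k+i}`. -/
theorem stmt16 (k : ℕ) (A B : Matrix (Fin (2 * k + 1)) (Fin (2 * k + 1)) ℂ)
    (hA : A.transpose = -A) (hB : B.transpose = -B)
    (hrA : A.rank = 2 * k) (hrB : B.rank = 2 * k)
    (hpencil : ∀ l : ℂ, (A + l • B).rank = 2 * k)
    (hcong : ∃ P : Matrix (Fin (2 * k + 1)) (Fin (2 * k + 1)) ℂ, IsUnit P ∧
      ∀ l : ℂ, P.transpose * (A + l • B) * P = AI k + l • BI k) :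
    ∃ Q : Matrix (Fin (2 * k + 1)) (Fin (2 * k + 1)) ℂ, IsUnit Q ∧
      qf (2 * k + 1) (Q.transpose * A * Q) =
        ∑ i ∈ Finset.Icc 1 k, X (2 * k + 1) i * X (2 * k + 1) (k + 1 + i) ∧
      qf (2 * k + 1) (Q.transpose * B * Q) =
        ∑ i ∈ Finset.Icc 1 k, X (2 * k + 1) i * X (2 * k + 1) (k + i) := by
  obtain ⟨P, hP, hPcong⟩ := hcong
  have h0 : P.transpose * A * P = AI k := by
    have h := hPcong 0
    simpa using h
  have h1 : P.transpose * B * P = BI k := by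
    have h := hPcong 1
    rw [one_smul, one_smul, Matrix.mul_add, Matrix.add_mul, h0] at h
    exact add_left_cancel h
  have hRunit : IsUnit (Rm k) :=
    ⟨⟨Rm k, Sm k, mul_eq_one_comm.mp (SR k), SR k⟩, rfl⟩
  refine ⟨P * Rm k, hP.mul hRunit, ?_, ?_⟩
  · have hQA : (P * Rm k).transpose * A * (P * Rm k) =
        (Rm k).transpose * (P.transpose * A * P) * Rm k := by
      rw [Matrix.transpose_mul]
      simp only [Matrix.mul_assoc]
    rw [hQA, h0, RAIR]
    exact qf_M k (k+1) (by omega) (by omega)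
  · have hQB : (P * Rm k).transpose * B * (P * Rm k) =
        (Rm k).transpose * (P.transpose * B * P) * Rm k := by
      rw [Matrix.transpose_mul]
      simp only [Matrix.mul_assoc]
    rw [hQB, h1, RBIR]
    exact qf_M k k (le_refl k) (by omega)
end
end
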